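/- arXiv:1501.00647 — 7 statements merged into one kernel-verified Lean document; each statement's English description precedes it below -/
import Mathlib

section
/- Let X be a real random variable and let c > 0. Then the law of X satisfies condition (TO) if and only if the law of c·X satisfies condition (TO). -/
/-!
Under `x ↦ c x` the numerator `x μ([x,∞))` of (TO) keeps its form, while the double
integral in the denominator picks up the factor `c²`. Since `1 + c² D ≥ min 1 c² (1 + D)`,
the integrand for the scaled measure is bounded by a constant times the rescaled integrand
for `μ`, so (TO) at level `κ` passes to level `c κ`; applying this to `c⁻¹` gives the converse.
-/

open MeasureTheory Set

/-- The denominator in condition (TO): `1 + ∫_0^x ∫_y^∞ μ((−∞,−z]) dz dy`. -/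
noncomputable def TOden (μ : Measure ℝ) (x : ℝ) : ENNReal :=
  1 + ∫⁻ y in Ioc (0 : ℝ) x, ∫⁻ z in Ioi y, μ (Iic (-z))

/-- A Borel measure `μ` on `ℝ` satisfies condition (TO) at level `κ > 0` if
`∫_κ^∞ x·μ([x,∞)) / (1 + ∫_0^x ∫_y^∞ μ((−∞,−z]) dz dy) dx < ∞`; the `ENNReal`
division is `0` whenever the denominator is infinite. -/
def TOat (μ : Measure ℝ) (κ : ℝ) : Prop :=
  (∫⁻ x in Ioi κ, (ENNReal.ofReal x * μ (Ici x)) / TOden μ x) < ⊤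

/-- `μ` satisfies condition (TO) if it satisfies (TO) at some level `κ > 0`. -/
def TO (μ : Measure ℝ) : Prop := ∃ κ > (0 : ℝ), TOat μ κ

open ENNReal

theorem setLIntegral_eq_mul_setLIntegral_comp_mul_left {c : ℝ} (hc : c ≠ 0) (f : ℝ → ℝ≥0∞)
    {s : Set ℝ} (hs : MeasurableSet s) :
    ∫⁻ x in s, f x = ENNReal.ofReal |c| * ∫⁻ t in (c * ·) ⁻¹' s, f (c * t) := by
  have he : MeasurableEmbedding (c * · : ℝ → ℝ) := (Homeomorph.mulLeft₀ c hc).measurableEmbedding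
  conv_lhs => rw [← Real.smul_map_volume_mul_left hc]
  rw [Measure.restrict_smul, lintegral_smul_measure, Measure.restrict_map he.measurable hs,
    he.lintegral_map, smul_eq_mul]

section ConstMul

variable {μ : Measure ℝ} {c : ℝ}

theorem map_const_mul_apply_Ici (hc : 0 < c) (x : ℝ) :
    μ.map (c * ·) (Ici x) = μ (Ici (x / c)) := by
  rw [Measure.map_apply (measurable_const_mul c) measurableSet_Ici, preimage_const_mul_Ici₀ _ hc]

theorem map_const_mul_apply_Iic (hc : 0 < c) (x : ℝ) :
    μ.map (c * ·) (Iic x) = μ (Iic (x / c)) := by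
  rw [Measure.map_apply (measurable_const_mul c) measurableSet_Iic, preimage_const_mul_Iic₀ _ hc]

theorem setLIntegral_Ioi_map_const_mul_Iic_neg (hc : 0 < c) (y : ℝ) :
    ∫⁻ z in Ioi y, μ.map (c * ·) (Iic (-z)) =
      ENNReal.ofReal c * ∫⁻ w in Ioi (y / c), μ (Iic (-w)) := by
  simp only [map_const_mul_apply_Iic hc]
  rw [setLIntegral_eq_mul_setLIntegral_comp_mul_left hc.ne' _ measurableSet_Ioi,
    preimage_const_mul_Ioi₀ _ hc, abs_of_pos hc]
  simp only [neg_div, mul_div_cancel_left₀ _ hc.ne']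

theorem TOden_map_const_mul (hc : 0 < c) (x : ℝ) :
    TOden (μ.map (c * ·)) x =
      1 + ENNReal.ofReal (c * c) * ∫⁻ y in Ioc 0 (x / c), ∫⁻ z in Ioi y, μ (Iic (-z)) := by
  simp only [TOden, setLIntegral_Ioi_map_const_mul_Iic_neg hc]
  rw [lintegral_const_mul' _ _ ofReal_ne_top,
    setLIntegral_eq_mul_setLIntegral_comp_mul_left hc.ne' _ measurableSet_Ioc,
    preimage_const_mul_Ioc₀ _ _ hc, zero_div, abs_of_pos hc, ofReal_mul hc.le, mul_assoc]
  simp only [mul_div_cancel_left₀ _ hc.ne']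

theorem ofReal_min_mul_TOden_le_TOden_map_const_mul (hc : 0 < c) (x : ℝ) :
    ENNReal.ofReal (min 1 (c * c)) * TOden μ (x / c) ≤ TOden (μ.map (c * ·)) x := by
  rw [TOden_map_const_mul hc, TOden, mul_add, mul_one]
  gcongr
  · simp
  · exact min_le_right _ _

theorem TOat.map_const_mul {κ : ℝ} (h : TOat μ κ) (hc : 0 < c) :
    TOat (μ.map (c * ·)) (c * κ) := by
  set m := ENNReal.ofReal (min 1 (c * c))
  have hm : m ≠ 0 := by simpa [m] using mul_pos hc hc
  have hbound : ∀ x, ENNReal.ofReal x * μ.map (c * ·) (Ici x) / TOden (μ.map (c * ·)) x ≤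
      m⁻¹ * ENNReal.ofReal c *
        (ENNReal.ofReal (x / c) * μ (Ici (x / c)) / TOden μ (x / c)) := fun x => by
    have hx : ENNReal.ofReal x = ENNReal.ofReal c * ENNReal.ofReal (x / c) := by
      rw [← ofReal_mul hc.le, mul_div_cancel₀ _ hc.ne']
    rw [map_const_mul_apply_Ici hc, hx]
    calc ENNReal.ofReal c * ENNReal.ofReal (x / c) * μ (Ici (x / c)) / TOden (μ.map (c * ·)) x
        ≤ ENNReal.ofReal c * ENNReal.ofReal (x / c) * μ (Ici (x / c)) / (m * TOden μ (x / c)) :=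
          ENNReal.div_le_div_left (ofReal_min_mul_TOden_le_TOden_map_const_mul hc _) _
      _ = _ := by
          simp only [div_eq_mul_inv, ENNReal.mul_inv (Or.inl hm) (Or.inl ofReal_ne_top)]
          ring
  calc ∫⁻ x in Ioi (c * κ), ENNReal.ofReal x * μ.map (c * ·) (Ici x) / TOden (μ.map (c * ·)) x
      ≤ ∫⁻ x in Ioi (c * κ), m⁻¹ * ENNReal.ofReal c *
          (ENNReal.ofReal (x / c) * μ (Ici (x / c)) / TOden μ (x / c)) := lintegral_mono hbound
    _ = m⁻¹ * ENNReal.ofReal c * (ENNReal.ofReal c *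
          ∫⁻ t in Ioi κ, ENNReal.ofReal t * μ (Ici t) / TOden μ t) := by
        rw [lintegral_const_mul' _ _ (mul_ne_top (inv_ne_top.mpr hm) ofReal_ne_top),
          setLIntegral_eq_mul_setLIntegral_comp_mul_left hc.ne' _ measurableSet_Ioi,
          preimage_const_mul_Ioi₀ _ hc, mul_div_cancel_left₀ _ hc.ne', abs_of_pos hc]
        simp only [mul_div_cancel_left₀ _ hc.ne']
    _ < ⊤ := mul_lt_top (mul_lt_top (inv_lt_top.mpr (pos_iff_ne_zero.mpr hm)) ofReal_lt_top)
        (mul_lt_top ofReal_lt_top h)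

theorem TO.map_const_mul (h : TO μ) (hc : 0 < c) : TO (μ.map (c * ·)) :=
  let ⟨κ, hκ, hκTO⟩ := h
  ⟨c * κ, mul_pos hc hκ, hκTO.map_const_mul hc⟩

theorem TO_map_const_mul_iff (hc : 0 < c) : TO (μ.map (c * ·)) ↔ TO μ := by
  refine ⟨fun h => ?_, fun h => h.map_const_mul hc⟩
  have h' := h.map_const_mul (inv_pos.mpr hc)
  have hid : (c⁻¹ * · : ℝ → ℝ) ∘ (c * ·) = id := funext fun x => inv_mul_cancel_left₀ hc.ne' x
  rwa [Measure.map_map (measurable_const_mul _) (measurable_const_mul _), hid, Measure.map_id] at h'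

end ConstMul

theorem TO_const_mul_general {Ω : Type*} [MeasurableSpace Ω] (P : Measure Ω)
    (X : Ω → ℝ) (hX : Measurable X) (c : ℝ) (hc : 0 < c) :
    TO (P.map X) ↔ TO (P.map fun ω => c * X ω) := by
  have hcX : P.map (fun ω => c * X ω) = (P.map X).map (c * ·) :=
    (Measure.map_map (measurable_const_mul c) hX).symm
  rw [hcX, TO_map_const_mul_iff hc]

/-- For a real random variable `X` and `c > 0`, the law of `X` satisfies (TO) iff
the law of `c • X` satisfies (TO). -/
theorem TO_const_mul {Ω : Type*} [MeasurableSpace Ω] (P : Measure Ω)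
    [IsProbabilityMeasure P] (X : Ω → ℝ) (hX : Measurable X) (c : ℝ) (hc : 0 < c) :
    TO (P.map X) ↔ TO (P.map fun ω => c * X ω) :=
  TO_const_mul_general P X hX c hc
end

section
/- Let X and Y be real random variables defined on a common probability space, with Y square integrable (E[Y²] < ∞); no independence of X and Y is assumed. Then the distribution of X satisfies condition (TO) if and only if the distribution of X + Y satisfies condition (TO). -/
open MeasureTheory Set

open scoped ENNReal

/-!
If `ν (Ici x) ≤ μ (Ici (x / 2)) + T x` and `μ (Iic (-z)) ≤ ν (Iic (-(z / 2))) + T z` with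
`∫ x T(x) dx < ∞`, then (TO) for `μ` at level `κ` gives (TO) for `ν` at level `2κ`. By Tonelli the
double integral in the denominator is `∫ min(z, t) μ((−∞, −z]) dz`, so the second bound gives
`TOden μ t ≤ (4 + ∫ x T(x) dx) · TOden ν t`; the numerator of `ν` then splits into a rescaled
numerator of `μ` and `x T(x)`. For `X` and `X + Y` both bounds hold in both directions with
`T x = P (x ≤ 2|Y|)`, whose first moment is `2 E[Y²]` by the layer-cake formula.
-/

lemma volume_Iio_inter_Ioc (z t : ℝ) :
    volume (Iio z ∩ Ioc 0 t) = ENNReal.ofReal (min z t) := by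
  apply le_antisymm
  · calc volume (Iio z ∩ Ioc 0 t) ≤ volume (Ioc 0 (min z t)) :=
          measure_mono fun y hy => ⟨hy.2.1, le_min hy.1.le hy.2.2⟩
      _ = ENNReal.ofReal (min z t) := by rw [Real.volume_Ioc, sub_zero]
  · calc ENNReal.ofReal (min z t) = volume (Ioo 0 (min z t)) := by
          rw [Real.volume_Ioo, sub_zero]
      _ ≤ volume (Iio z ∩ Ioc 0 t) :=
          measure_mono fun y hy => ⟨hy.2.trans_le (min_le_left _ _),
            hy.1, (hy.2.trans_le (min_le_right _ _)).le⟩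

lemma setLIntegral_Ioc_setLIntegral_Ioi {g : ℝ → ℝ≥0∞} (hg : Measurable g) (t : ℝ) :
    ∫⁻ y in Ioc 0 t, ∫⁻ z in Ioi y, g z = ∫⁻ z, ENNReal.ofReal (min z t) * g z := by
  have hmeas : Measurable (Function.uncurry fun y z : ℝ => (Ioi y).indicator g z) := by
    simp only [Function.uncurry_def, indicator_apply, mem_Ioi]
    exact Measurable.ite (measurableSet_lt measurable_fst measurable_snd)
      (hg.comp measurable_snd) measurable_const
  calc ∫⁻ y in Ioc 0 t, ∫⁻ z in Ioi y, g z
      = ∫⁻ y in Ioc 0 t, ∫⁻ z, (Ioi y).indicator g z := by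
        simp_rw [lintegral_indicator measurableSet_Ioi]
    _ = ∫⁻ z, ∫⁻ y in Ioc 0 t, (Iio z).indicator (fun _ => g z) y :=
        lintegral_lintegral_swap hmeas.aemeasurable
    _ = ∫⁻ z, ENNReal.ofReal (min z t) * g z := by
        refine lintegral_congr fun z => ?_
        rw [lintegral_indicator_const measurableSet_Iio, Measure.restrict_apply measurableSet_Iio,
          volume_Iio_inter_Ioc, mul_comm]

lemma lintegral_comp_div_two {f : ℝ → ℝ≥0∞} (hf : Measurable f) :
    ∫⁻ x, f (x / 2) = 2 * ∫⁻ x, f x := by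
  simp_rw [div_eq_inv_mul]
  rw [← lintegral_map hf (measurable_const_mul _), Real.map_volume_mul_left (by norm_num),
    lintegral_smul_measure]
  norm_num

lemma lintegral_ofReal_mul_meas_le {α : Type*} [MeasurableSpace α] (μ : Measure α) {f : α → ℝ}
    (hf0 : 0 ≤ f) (hf : AEMeasurable f μ) :
    ∫⁻ x, ENNReal.ofReal x * μ {a | x ≤ f a} = ∫⁻ a, ENNReal.ofReal (f a ^ 2 / 2) ∂μ := by
  have layercake := lintegral_comp_eq_lintegral_meas_le_mul μ (Filter.Eventually.of_forall hf0)
    hf (fun _ _ => intervalIntegral.intervalIntegrable_id)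
    ((ae_restrict_iff' measurableSet_Ioi).2 (ae_of_all _ fun _ ht => le_of_lt ht))
  simp only [integral_id, ne_eq, OfNat.ofNat_ne_zero, not_false_eq_true, zero_pow, sub_zero]
    at layercake
  rw [layercake, ← setLIntegral_eq_of_support_subset (s := Ioi 0)]
  · simp_rw [mul_comm]
  · intro x hx
    by_contra h
    simp [ENNReal.ofReal_of_nonpos (not_lt.1 h)] at hx

lemma antitone_measure_Iic_neg (μ : Measure ℝ) : Antitone fun z => μ (Iic (-z)) :=
  fun _ _ h => measure_mono (Iic_subset_Iic.2 (neg_le_neg h))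

lemma TOden_eq_lintegral (μ : Measure ℝ) (t : ℝ) :
    TOden μ t = 1 + ∫⁻ z, ENNReal.ofReal (min z t) * μ (Iic (-z)) := by
  rw [TOden, setLIntegral_Ioc_setLIntegral_Ioi (antitone_measure_Iic_neg μ).measurable]

lemma antitone_measure_Ici (μ : Measure ℝ) : Antitone fun x => μ (Ici x) :=
  fun _ _ h => measure_mono (Ici_subset_Ici.2 h)

lemma TOden_mono (μ : Measure ℝ) : Monotone (TOden μ) := fun _ _ h =>
  add_le_add_right (lintegral_mono_set (Ioc_subset_Ioc_right h)) 1

lemma one_le_TOden (μ : Measure ℝ) (x : ℝ) : 1 ≤ TOden μ x := le_self_add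

lemma ofReal_min_two_mul_le (z : ℝ) {t : ℝ} (ht : 0 ≤ t) :
    ENNReal.ofReal (min (2 * z) t) ≤ 2 * ENNReal.ofReal (min z t) := by
  rw [← ENNReal.ofReal_ofNat 2, ← ENNReal.ofReal_mul zero_le_two]
  refine ENNReal.ofReal_le_ofReal ?_
  rcases le_total z t with h | h
  · rw [min_eq_left h]; exact min_le_left _ _
  · rw [min_eq_right h]; linarith [min_le_right (2 * z) t]

lemma TOden_le_of_meas_Iic_le {μ ν : Measure ℝ} {T : ℝ → ℝ≥0∞}
    (hT : ∀ z, μ (Iic (-z)) ≤ ν (Iic (-(z / 2))) + T z) {t : ℝ} (ht : 0 ≤ t) :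
    TOden μ t ≤ (4 + ∫⁻ z, ENNReal.ofReal z * T z) * TOden ν t := by
  set S := ∫⁻ z, ENNReal.ofReal z * T z
  set I := ∫⁻ z, ENNReal.ofReal (min z t) * ν (Iic (-z))
  have hK : Measurable fun z : ℝ => ENNReal.ofReal (min z t) := by fun_prop
  have hν := (antitone_measure_Iic_neg ν).measurable
  have hhalf : ∫⁻ z, ENNReal.ofReal (min z t) * ν (Iic (-(z / 2))) ≤ 4 * I :=
    calc ∫⁻ z, ENNReal.ofReal (min z t) * ν (Iic (-(z / 2)))
        = 2 * ∫⁻ w, ENNReal.ofReal (min (2 * w) t) * ν (Iic (-w)) := by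
          rw [← lintegral_comp_div_two (f := fun w => ENNReal.ofReal (min (2 * w) t) * ν (Iic (-w)))
            ((hK.comp (measurable_const_mul 2)).mul hν)]
          simp only [mul_div_cancel₀ _ (two_ne_zero (α := ℝ))]
      _ ≤ 2 * ∫⁻ w, 2 * (ENNReal.ofReal (min w t) * ν (Iic (-w))) := by
          gcongr 2 * ∫⁻ w, ?_ with w
          rw [← mul_assoc]
          gcongr
          exact ofReal_min_two_mul_le w ht
      _ = 4 * I := by
          rw [lintegral_const_mul' _ _ ENNReal.ofNat_ne_top, ← mul_assoc]
          congr 1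
          norm_num
  have htail : ∫⁻ z, ENNReal.ofReal (min z t) * T z ≤ S :=
    lintegral_mono fun z => by gcongr; exact min_le_left _ _
  calc TOden μ t
      ≤ 1 + ∫⁻ z, (ENNReal.ofReal (min z t) * ν (Iic (-(z / 2)))
          + ENNReal.ofReal (min z t) * T z) := by
        rw [TOden_eq_lintegral]
        gcongr with z
        rw [← mul_add]
        gcongr
        exact hT z
    _ ≤ 1 + (4 * I + S) := by
        rw [lintegral_add_left (f := fun z => ENNReal.ofReal (min z t) * ν (Iic (-(z / 2))))
          (hK.mul (hν.comp (measurable_id.div_const 2)))]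
        gcongr
    _ ≤ 4 + (4 * I + S) + S * I := le_add_right (by gcongr; norm_num)
    _ = (4 + S) * (1 + I) := by ring
    _ = (4 + S) * TOden ν t := by rw [TOden_eq_lintegral]

lemma TOat_two_mul_of_meas_le {μ ν : Measure ℝ} {T : ℝ → ℝ≥0∞}
    (hS : ∫⁻ x, ENNReal.ofReal x * T x ≠ ⊤)
    (hIci : ∀ x, ν (Ici x) ≤ μ (Ici (x / 2)) + T x)
    (hIic : ∀ z, μ (Iic (-z)) ≤ ν (Iic (-(z / 2))) + T z)
    {κ : ℝ} (hκ : 0 ≤ κ) (h : TOat μ κ) : TOat ν (2 * κ) := by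
  set S := ∫⁻ x, ENNReal.ofReal x * T x
  set M := 4 + S
  have hM0 : M ≠ 0 := by positivity
  have hMtop : M ≠ ⊤ := ENNReal.add_ne_top.2 ⟨ENNReal.ofNat_ne_top, hS⟩
  set f := fun u => ENNReal.ofReal u * μ (Ici u) / TOden μ u
  have hf : Measurable f :=
    (ENNReal.measurable_ofReal.mul (antitone_measure_Ici μ).measurable).div
      (TOden_mono μ).measurable
  have hpt : ∀ x ∈ Ioi (2 * κ), ENNReal.ofReal x * ν (Ici x) / TOden ν x
      ≤ 2 * M * (Ioi κ).indicator f (x / 2) + ENNReal.ofReal x * T x := by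
    intro x hx
    have hκx : κ < x / 2 := by rw [mem_Ioi] at hx; linarith
    have hden : TOden μ (x / 2) ≤ M * TOden ν x :=
      (TOden_mono μ (by linarith)).trans (TOden_le_of_meas_Iic_le hIic (by linarith))
    have hx2 : ENNReal.ofReal x = 2 * ENNReal.ofReal (x / 2) := by
      rw [← ENNReal.ofReal_ofNat 2, ← ENNReal.ofReal_mul zero_le_two,
        mul_div_cancel₀ _ (two_ne_zero (α := ℝ))]
    calc ENNReal.ofReal x * ν (Ici x) / TOden ν x
        ≤ ENNReal.ofReal x * μ (Ici (x / 2)) / TOden ν x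
            + ENNReal.ofReal x * T x / TOden ν x := by
          rw [← ENNReal.add_div, ← mul_add]
          gcongr
          exact hIci x
      _ ≤ 2 * M * f (x / 2) + ENNReal.ofReal x * T x := by
          gcongr
          · calc ENNReal.ofReal x * μ (Ici (x / 2)) / TOden ν x
                = M * (ENNReal.ofReal x * μ (Ici (x / 2))) / (M * TOden ν x) :=
                  (ENNReal.mul_div_mul_left _ _ hM0 hMtop).symm
              _ ≤ M * (ENNReal.ofReal x * μ (Ici (x / 2))) / TOden μ (x / 2) :=
                  ENNReal.div_le_div_left hden _
              _ = 2 * M * f (x / 2) := by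
                  rw [hx2, mul_div_assoc, mul_assoc, mul_div_assoc, ← mul_assoc, mul_comm M 2]
          · exact ENNReal.div_le_of_le_mul (le_mul_of_one_le_right' (one_le_TOden ν x))
      _ = 2 * M * (Ioi κ).indicator f (x / 2) + ENNReal.ofReal x * T x := by
          rw [indicator_of_mem (mem_Ioi.2 hκx)]
  rw [TOat] at h ⊢
  calc ∫⁻ x in Ioi (2 * κ), ENNReal.ofReal x * ν (Ici x) / TOden ν x
      ≤ ∫⁻ x in Ioi (2 * κ), (2 * M * (Ioi κ).indicator f (x / 2) + ENNReal.ofReal x * T x) :=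
        setLIntegral_mono' measurableSet_Ioi hpt
    _ ≤ ∫⁻ x, (2 * M * (Ioi κ).indicator f (x / 2) + ENNReal.ofReal x * T x) :=
        setLIntegral_le_lintegral _ _
    _ = 2 * M * (2 * ∫⁻ x in Ioi κ, f x) + S := by
        rw [lintegral_add_left (f := fun x => 2 * M * (Ioi κ).indicator f (x / 2))
            (((hf.indicator measurableSet_Ioi).comp (measurable_id.div_const 2)).const_mul _),
          lintegral_const_mul' _ _ (ENNReal.mul_ne_top ENNReal.ofNat_ne_top hMtop),
          lintegral_comp_div_two (f := (Ioi κ).indicator f) (hf.indicator measurableSet_Ioi),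
          lintegral_indicator measurableSet_Ioi]
    _ < ⊤ := by
        have := h.ne
        finiteness

lemma TO_of_meas_le {μ ν : Measure ℝ} {T : ℝ → ℝ≥0∞}
    (hS : ∫⁻ x, ENNReal.ofReal x * T x ≠ ⊤)
    (hIci : ∀ x, ν (Ici x) ≤ μ (Ici (x / 2)) + T x)
    (hIic : ∀ z, μ (Iic (-z)) ≤ ν (Iic (-(z / 2))) + T z) (h : TO μ) : TO ν :=
  let ⟨κ, hκ, hμκ⟩ := h
  ⟨2 * κ, by positivity, TOat_two_mul_of_meas_le hS hIci hIic hκ.le hμκ⟩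

section tails

variable {Ω : Type*} [MeasurableSpace Ω] (P : Measure Ω) {U V W : Ω → ℝ}

lemma map_Ici_le_add_meas (hU : Measurable U) (hV : Measurable V)
    (hUV : ∀ ω, |U ω - V ω| ≤ W ω) (x : ℝ) :
    P.map U (Ici x) ≤ P.map V (Ici (x / 2)) + P {ω | x ≤ 2 * W ω} := by
  rw [Measure.map_apply hU measurableSet_Ici, Measure.map_apply hV measurableSet_Ici]
  refine (measure_mono fun ω (hω : x ≤ U ω) => ?_).trans (measure_union_le _ _)
  by_contra! h
  simp only [mem_union, mem_preimage, mem_Ici, mem_ofPred_eq, not_or, not_le] at h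
  linarith [le_abs_self (U ω - V ω), hUV ω]

lemma map_Iic_neg_le_add_meas (hU : Measurable U) (hV : Measurable V)
    (hUV : ∀ ω, |U ω - V ω| ≤ W ω) (z : ℝ) :
    P.map U (Iic (-z)) ≤ P.map V (Iic (-(z / 2))) + P {ω | z ≤ 2 * W ω} := by
  rw [Measure.map_apply hU measurableSet_Iic, Measure.map_apply hV measurableSet_Iic]
  refine (measure_mono fun ω (hω : U ω ≤ -z) => ?_).trans (measure_union_le _ _)
  by_contra! h
  simp only [mem_union, mem_preimage, mem_Iic, mem_ofPred_eq, not_or, not_le] at h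
  linarith [neg_abs_le (U ω - V ω), hUV ω]

end tails

theorem TO_add_sq_integrable_general {Ω : Type*} [MeasurableSpace Ω] (P : Measure Ω)
    (X Y : Ω → ℝ) (hX : Measurable X) (hY : Measurable Y)
    (hY2 : Integrable (fun ω => Y ω ^ 2) P) :
    TO (P.map X) ↔ TO (P.map fun ω => X ω + Y ω) := by
  have hS : ∫⁻ x, ENNReal.ofReal x * P {ω | x ≤ 2 * |Y ω|} ≠ ⊤ := by
    rw [lintegral_ofReal_mul_meas_le P (fun ω => by positivity) (hY.abs.const_mul 2).aemeasurable]
    refine ne_of_eq_of_ne (lintegral_congr fun ω => ?_) (hY2.const_mul 2).lintegral_lt_top.ne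
    rw [mul_pow, sq_abs]
    ring_nf
  have hXY := hX.add hY
  exact ⟨TO_of_meas_le hS (map_Ici_le_add_meas P hXY hX (by simp))
      (map_Iic_neg_le_add_meas P hX hXY (by simp)),
    TO_of_meas_le hS (map_Ici_le_add_meas P hX hXY (by simp))
      (map_Iic_neg_le_add_meas P hXY hX (by simp))⟩

/-- If `Y` is square integrable (no independence of `X` and `Y` assumed), the
distribution of `X` satisfies (TO) iff the distribution of `X + Y` does. -/
theorem TO_add_sq_integrable {Ω : Type*} [MeasurableSpace Ω] (P : Measure Ω)
    [IsProbabilityMeasure P] (X Y : Ω → ℝ) (hX : Measurable X) (hY : Measurable Y)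
    (hY2 : Integrable (fun ω => Y ω ^ 2) P) :
    TO (P.map X) ↔ TO (P.map fun ω => X ω + Y ω) :=
  TO_add_sq_integrable_general P X Y hX hY hY2
end

section
/- Let X and Y be real random variables on a common probability space such that E[(max(Y,0))²] < ∞, and suppose that the law of X satisfies condition (TO). Then for every κ > 0, ∫_κ^∞ x·P(X ≥ x/2) / (1 + ∫_0^x ∫_y^∞ max(P(X ≤ −2z) − P(Y ≥ z), 0) dz dy) dx < ∞, where the integrand is interpreted as 0 at points x where the double integral in the denominator is infinite. -/
open MeasureTheory Set

open scoped ENNReal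

/-! Substituting `z ↦ 2z`, the (TO) denominator at `x / 2` is at most
`1 + 4 ∫_0^x ∫_y^∞ P(X ≤ −2z) dz dy`, and this double integral exceeds the one with
`(P(X ≤ −2z) − P(Y ≥ z))₊` by at most `∫_0^∞ ∫_y^∞ P(Y ≥ z) dz dy = E[(Y⁺)²] / 2 < ∞`.
So the integrand is bounded by a constant multiple of the (TO) integrand of the law of `X`
at `x / 2`, and for a finite measure (TO) at one level gives (TO) at every level. -/

lemma ENNReal.div_le_mul_div_of_le_mul {a d d' K : ℝ≥0∞} (hK0 : K ≠ 0) (hKtop : K ≠ ⊤)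
    (h : d' ≤ K * d) : a / d ≤ K * (a / d') :=
  calc a / d = K * a / (K * d) := (ENNReal.mul_div_mul_left _ _ hK0 hKtop).symm
    _ ≤ K * a / d' := ENNReal.div_le_div_left h _
    _ = K * (a / d') := mul_div_assoc _ _ _

lemma setLIntegral_eq_ofReal_mul_setLIntegral_comp_mul_left (f : ℝ → ℝ≥0∞) {c : ℝ} (hc : 0 < c)
    (s : Set ℝ) :
    ∫⁻ y in s, f y = ENNReal.ofReal c * ∫⁻ x in (c * ·) ⁻¹' s, f (c * x) := by
  have he := measurableEmbedding_mulLeft₀ hc.ne'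
  rw [← he.lintegral_map, ← he.restrict_map, Real.map_volume_mul_left hc.ne',
    Measure.restrict_smul, lintegral_smul_measure, smul_eq_mul, ← mul_assoc,
    ← ENNReal.ofReal_mul hc.le, abs_inv, abs_of_pos hc, mul_inv_cancel₀ hc.ne',
    ENNReal.ofReal_one, one_mul]

lemma lintegral_Ioc_lintegral_Ioi_comp_mul_left (f : ℝ → ℝ≥0∞) {c : ℝ} (hc : 0 < c) (x : ℝ) :
    ∫⁻ y in Ioc 0 (c * x), ∫⁻ z in Ioi y, f z =
      ENNReal.ofReal c ^ 2 * ∫⁻ y in Ioc 0 x, ∫⁻ z in Ioi y, f (c * z) := by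
  have hIoi (y : ℝ) : (c * ·) ⁻¹' Ioi (c * y) = Ioi y := by
    rw [preimage_const_mul_Ioi₀ _ hc, mul_div_cancel_left₀ _ hc.ne']
  have hIoc : (c * ·) ⁻¹' Ioc 0 (c * x) = Ioc 0 x := by
    rw [preimage_const_mul_Ioc₀ _ _ hc, mul_div_cancel_left₀ _ hc.ne', zero_div]
  calc ∫⁻ y in Ioc 0 (c * x), ∫⁻ z in Ioi y, f z
      = ENNReal.ofReal c * ∫⁻ y in Ioc 0 x, ∫⁻ z in Ioi (c * y), f z := by
        rw [setLIntegral_eq_ofReal_mul_setLIntegral_comp_mul_left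
          (fun y ↦ ∫⁻ z in Ioi y, f z) hc, hIoc]
    _ = ENNReal.ofReal c * ∫⁻ y in Ioc 0 x, ENNReal.ofReal c * ∫⁻ z in Ioi y, f (c * z) := by
        simp_rw [setLIntegral_eq_ofReal_mul_setLIntegral_comp_mul_left f hc (Ioi _), hIoi]
    _ = _ := by rw [lintegral_const_mul' _ _ ENNReal.ofReal_ne_top, ← mul_assoc, ← pow_two]

lemma lintegral_Ioi_lintegral_Ioi (f : ℝ → ℝ≥0∞) (hf : Measurable f) (a : ℝ) :
    ∫⁻ y in Ioi a, ∫⁻ z in Ioi y, f z = ∫⁻ z in Ioi a, f z * ENNReal.ofReal (z - a) := by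
  have hmeas : Measurable (Function.uncurry fun y z : ℝ ↦ (Ioi y).indicator f z) := by
    have : (Function.uncurry fun y z : ℝ ↦ (Ioi y).indicator f z) =
        {p : ℝ × ℝ | p.1 < p.2}.indicator (fun p ↦ f p.2) := by
      ext p; simp [Function.uncurry, indicator_apply]
    rw [this]
    exact (hf.comp measurable_snd).indicator (measurableSet_lt measurable_fst measurable_snd)
  have hinner (z : ℝ) : ∫⁻ y in Ioi a, (Ioi y).indicator f z = f z * ENNReal.ofReal (z - a) := by
    have : (fun y ↦ (Ioi y).indicator f z) = (Iio z).indicator fun _ ↦ f z := by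
      ext y; simp [indicator_apply]
    rw [this, lintegral_indicator measurableSet_Iio, Measure.restrict_restrict measurableSet_Iio,
      setLIntegral_const, Iio_inter_Ioi, Real.volume_Ioo]
  calc ∫⁻ y in Ioi a, ∫⁻ z in Ioi y, f z
      = ∫⁻ y in Ioi a, ∫⁻ z, (Ioi y).indicator f z := by
        simp_rw [lintegral_indicator measurableSet_Ioi]
    _ = ∫⁻ z, f z * ENNReal.ofReal (z - a) := by
        rw [lintegral_lintegral_swap hmeas.aemeasurable]; simp_rw [hinner]
    _ = _ := by
        refine (setLIntegral_eq_of_support_subset fun z hz ↦ ?_).symm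
        by_contra hza
        simp [ENNReal.ofReal_eq_zero.2 (sub_nonpos.2 (not_lt.1 hza))] at hz

lemma lintegral_Ioi_lintegral_Ioi_meas_le_lt_top {Ω : Type*} [MeasurableSpace Ω]
    (P : Measure Ω) (Y : Ω → ℝ) (hY : Measurable Y)
    (hY2 : Integrable (fun ω ↦ max (Y ω) 0 ^ 2) P) :
    ∫⁻ y in Ioi 0, ∫⁻ z in Ioi y, P {ω | z ≤ Y ω} < ⊤ := by
  have hanti : Antitone fun z ↦ P {ω | z ≤ Y ω} :=
    fun z w hzw ↦ measure_mono fun ω hω ↦ hzw.trans hω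
  have hlayer := lintegral_rpow_eq_lintegral_meas_le_mul P
    (Filter.Eventually.of_forall fun ω ↦ le_max_right (Y ω) 0)
    (hY.max measurable_const).aemeasurable two_pos
  rw [show (2 : ℝ) - 1 = 1 by norm_num, ENNReal.ofReal_ofNat] at hlayer
  simp only [Real.rpow_one, Real.rpow_two] at hlayer
  have hpos : ∀ t ∈ Ioi (0 : ℝ), {ω | t ≤ max (Y ω) 0} = {ω | t ≤ Y ω} := fun t ht ↦ by
    ext ω; simp [not_le.2 (mem_Ioi.1 ht)]
  rw [lintegral_Ioi_lintegral_Ioi _ hanti.measurable]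
  simp_rw [sub_zero]
  refine ENNReal.lt_top_of_mul_ne_top_right ?_ (two_ne_zero' ℝ≥0∞)
  calc 2 * ∫⁻ t in Ioi 0, P {ω | t ≤ Y ω} * ENNReal.ofReal t
      = 2 * ∫⁻ t in Ioi 0, P {ω | t ≤ max (Y ω) 0} * ENNReal.ofReal t := by
        congr 1
        exact setLIntegral_congr_fun measurableSet_Ioi fun t ht ↦ by rw [hpos t ht]
    _ = ∫⁻ ω, ENNReal.ofReal (max (Y ω) 0 ^ 2) ∂P := hlayer.symm
    _ ≠ ⊤ := hY2.lintegral_lt_top.ne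

lemma lintegral_Ioc_lintegral_Ioi_le_tsub_add (a b : ℝ → ℝ≥0∞) (hb : Measurable b) (x : ℝ) :
    ∫⁻ y in Ioc 0 x, ∫⁻ z in Ioi y, a z ≤
      (∫⁻ y in Ioc 0 x, ∫⁻ z in Ioi y, (a z - b z)) + ∫⁻ y in Ioi 0, ∫⁻ z in Ioi y, b z := by
  have hB : Measurable fun y ↦ ∫⁻ z in Ioi y, b z :=
    Antitone.measurable fun (y y' : ℝ) h ↦ lintegral_mono_set (Ioi_subset_Ioi h)
  calc ∫⁻ y in Ioc 0 x, ∫⁻ z in Ioi y, a z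
      ≤ ∫⁻ y in Ioc 0 x, ∫⁻ z in Ioi y, (a z - b z + b z) :=
        lintegral_mono fun y ↦ lintegral_mono fun z ↦ le_tsub_add
    _ = (∫⁻ y in Ioc 0 x, ∫⁻ z in Ioi y, (a z - b z)) + ∫⁻ y in Ioc 0 x, ∫⁻ z in Ioi y, b z := by
        simp_rw [lintegral_add_right _ hb]
        exact lintegral_add_right _ hB
    _ ≤ _ := by gcongr; exact Ioc_subset_Ioi_self

lemma TOden_half_le (μ : Measure ℝ) (b : ℝ → ℝ≥0∞) (hb : Measurable b) (x : ℝ) :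
    TOden μ (x / 2) ≤ 4 * (1 + ∫⁻ y in Ioi 0, ∫⁻ z in Ioi y, b z) *
      (1 + ∫⁻ y in Ioc 0 x, ∫⁻ z in Ioi y, (μ (Iic (-(2 * z))) - b z)) := by
  set C := ∫⁻ y in Ioi 0, ∫⁻ z in Ioi y, b z
  set S := ∫⁻ y in Ioc 0 x, ∫⁻ z in Ioi y, (μ (Iic (-(2 * z))) - b z)
  calc TOden μ (x / 2)
      ≤ TOden μ (2 * x) := by
        unfold TOden
        gcongr 1 + ?_
        exact lintegral_mono_set fun y hy ↦ ⟨hy.1, by linarith [hy.1, hy.2]⟩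
    _ = 1 + 4 * ∫⁻ y in Ioc 0 x, ∫⁻ z in Ioi y, μ (Iic (-(2 * z))) := by
        rw [TOden, lintegral_Ioc_lintegral_Ioi_comp_mul_left _ two_pos, ENNReal.ofReal_ofNat]
        norm_num
    _ ≤ 1 + 4 * (S + C) := by
        gcongr
        exact lintegral_Ioc_lintegral_Ioi_le_tsub_add _ b hb x
    _ = 1 + 4 * S + 4 * C + 0 := by ring
    _ ≤ 4 + 4 * S + 4 * C + 4 * C * S := by gcongr <;> norm_num
    _ = 4 * (1 + C) * (1 + S) := by ring

lemma TO.TOat {μ : Measure ℝ} [IsFiniteMeasure μ] (h : TO μ) (κ : ℝ) : TOat μ κ := by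
  obtain ⟨κ₀, -, h₀⟩ := h
  have hbdd : ∀ x ∈ Ioc κ κ₀,
      ENNReal.ofReal x * μ (Ici x) / TOden μ x ≤ ENNReal.ofReal κ₀ * μ univ := fun x hx ↦
    calc ENNReal.ofReal x * μ (Ici x) / TOden μ x
        ≤ ENNReal.ofReal x * μ (Ici x) :=
          ENNReal.div_le_of_le_mul (le_mul_of_one_le_right' le_self_add)
      _ ≤ ENNReal.ofReal κ₀ * μ univ := by
        gcongr
        · exact hx.2
        · exact subset_univ _
  calc ∫⁻ x in Ioi κ, ENNReal.ofReal x * μ (Ici x) / TOden μ x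
      ≤ ∫⁻ x in Ioc κ κ₀ ∪ Ioi κ₀, ENNReal.ofReal x * μ (Ici x) / TOden μ x :=
        lintegral_mono_set fun x hx ↦ (le_or_gt x κ₀).imp (fun h ↦ ⟨hx, h⟩) id
    _ ≤ (∫⁻ x in Ioc κ κ₀, ENNReal.ofReal x * μ (Ici x) / TOden μ x) +
          ∫⁻ x in Ioi κ₀, ENNReal.ofReal x * μ (Ici x) / TOden μ x := lintegral_union_le _ _ _
    _ ≤ ENNReal.ofReal κ₀ * μ univ * volume (Ioc κ κ₀) +
          ∫⁻ x in Ioi κ₀, ENNReal.ofReal x * μ (Ici x) / TOden μ x := by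
        gcongr
        rw [← setLIntegral_const]
        exact setLIntegral_mono' measurableSet_Ioc hbdd
    _ < ⊤ := ENNReal.add_lt_top.2 ⟨by simp [Real.volume_Ioc, ENNReal.mul_lt_top], h₀⟩

lemma lintegral_Ioi_div_lt_top_of_TOden_half_le {μ : Measure ℝ} {κ : ℝ} (hTO : TOat μ (κ / 2))
    {D : ℝ → ℝ≥0∞} {K : ℝ≥0∞} (hK0 : K ≠ 0) (hKtop : K ≠ ⊤)
    (hD : ∀ x, TOden μ (x / 2) ≤ K * D x) :
    ∫⁻ x in Ioi κ, ENNReal.ofReal x * μ (Ici (x / 2)) / D x < ⊤ := by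
  set g : ℝ → ℝ≥0∞ := fun u ↦ ENNReal.ofReal u * μ (Ici u) / TOden μ u
  have hpt (x : ℝ) : ENNReal.ofReal x * μ (Ici (x / 2)) / D x ≤ 2 * K * g (x / 2) := by
    have hx : ENNReal.ofReal x = 2 * ENNReal.ofReal (x / 2) := by
      rw [← ENNReal.ofReal_ofNat 2, ← ENNReal.ofReal_mul zero_le_two, mul_div_cancel₀ _ two_ne_zero]
    calc ENNReal.ofReal x * μ (Ici (x / 2)) / D x
        ≤ K * (ENNReal.ofReal x * μ (Ici (x / 2)) / TOden μ (x / 2)) :=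
          ENNReal.div_le_mul_div_of_le_mul hK0 hKtop (hD x)
      _ = 2 * K * g (x / 2) := by
          simp only [g, hx, mul_assoc, mul_div_assoc]
          ring
  have hscale : ∫⁻ x in Ioi κ, g (x / 2) = 2 * ∫⁻ u in Ioi (κ / 2), g u := by
    rw [setLIntegral_eq_ofReal_mul_setLIntegral_comp_mul_left _ two_pos,
      preimage_const_mul_Ioi₀ _ two_pos, ENNReal.ofReal_ofNat]
    simp_rw [mul_div_cancel_left₀ _ (two_ne_zero' ℝ)]
  calc ∫⁻ x in Ioi κ, ENNReal.ofReal x * μ (Ici (x / 2)) / D x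
      ≤ ∫⁻ x in Ioi κ, 2 * K * g (x / 2) := lintegral_mono hpt
    _ = 2 * K * (2 * ∫⁻ u in Ioi (κ / 2), g u) := by
        rw [lintegral_const_mul' _ _ (ENNReal.mul_ne_top ENNReal.ofNat_ne_top hKtop), hscale]
    _ < ⊤ := ENNReal.mul_lt_top (ENNReal.mul_lt_top (by norm_num) hKtop.lt_top)
        (ENNReal.mul_lt_top (by norm_num) hTO)

/-- In `ℝ≥0∞` the truncated subtraction realizes `max(· − ·, 0)`, and division by an infinite
denominator gives `0`. -/
theorem TO_half_with_error_general {Ω : Type*} [MeasurableSpace Ω] (P : Measure Ω)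
    [IsProbabilityMeasure P] (X Y : Ω → ℝ) (hX : Measurable X) (hY : Measurable Y)
    (hY2 : Integrable (fun ω => max (Y ω) 0 ^ 2) P)
    (hTO : TO (P.map X)) (κ : ℝ) :
    (∫⁻ x in Ioi κ,
        (ENNReal.ofReal x * P {ω | x / 2 ≤ X ω}) /
          (1 + ∫⁻ y in Ioc (0 : ℝ) x, ∫⁻ z in Ioi y,
              (P {ω | X ω ≤ -(2 * z)} - P {ω | z ≤ Y ω}))) < ⊤ := by
  have hIci (t : ℝ) : P {ω | t ≤ X ω} = P.map X (Ici t) :=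
    (Measure.map_apply hX measurableSet_Ici).symm
  have hIic (t : ℝ) : P {ω | X ω ≤ t} = P.map X (Iic t) :=
    (Measure.map_apply hX measurableSet_Iic).symm
  simp_rw [hIci, hIic]
  have hb : Measurable fun z ↦ P {ω | z ≤ Y ω} :=
    Antitone.measurable fun z w h ↦ measure_mono fun ω hω ↦ h.trans hω
  have hC := lintegral_Ioi_lintegral_Ioi_meas_le_lt_top P Y hY hY2
  exact lintegral_Ioi_div_lt_top_of_TOden_half_le (hTO.TOat _) (by simp)
    (ENNReal.mul_ne_top ENNReal.ofNat_ne_top (ENNReal.add_ne_top.2 ⟨ENNReal.one_ne_top, hC.ne⟩))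
    (TOden_half_le _ _ hb)

/-- If `E[(max(Y,0))²] < ∞` and the law of `X` satisfies (TO), then for every
`κ > 0`,
`∫_κ^∞ x·P(X ≥ x/2) / (1 + ∫_0^x ∫_y^∞ (P(X ≤ −2z) − P(Y ≥ z))₊ dz dy) dx < ∞`,
where in `ℝ≥0∞` the truncated subtraction realizes `max(· − ·, 0)` and division
by an infinite denominator gives `0`. -/
theorem TO_half_with_error {Ω : Type*} [MeasurableSpace Ω] (P : Measure Ω)
    [IsProbabilityMeasure P] (X Y : Ω → ℝ) (hX : Measurable X) (hY : Measurable Y)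
    (hY2 : Integrable (fun ω => max (Y ω) 0 ^ 2) P)
    (hTO : TO (P.map X)) (κ : ℝ) (hκ : 0 < κ) :
    (∫⁻ x in Ioi κ,
        (ENNReal.ofReal x * P {ω | x / 2 ≤ X ω}) /
          (1 + ∫⁻ y in Ioc (0 : ℝ) x, ∫⁻ z in Ioi y,
              (P {ω | X ω ≤ -(2 * z)} - P {ω | z ≤ Y ω}))) < ⊤ :=
  TO_half_with_error_general P X Y hX hY hY2 hTO κ
end

section
/- In the random-sum setup, assume additionally that P(i ∈ {Y_1, …, Y_N}) > 0 for every i ∈ E (that is, with positive probability some index n with 1 ≤ n ≤ N has Y_n = i). Then there exist κ ≥ 0 and q > 0 such that for all z ≥ 0, P(Z ≤ −z) ≥ q · max_{i∈E} Π_i((−∞, −z − κ]). -/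
open MeasureTheory Set

/-- The random-sum setup: a family `X i n` of independent real random variables with
`X i n ∼ law i`, an `E`-valued sequence `Y` and an `ℕ`-valued variable `N` such that
the pair `((Y n)ₙ, N)` is independent of the whole family `(X i n)`. -/
structure RandomSumSetup (E : Type*) [MeasurableSpace E] (Ω : Type*) [MeasurableSpace Ω]
    (P : Measure Ω) (law : E → Measure ℝ) where
  X : E → ℕ → Ω → ℝ
  Y : ℕ → Ω → E
  N : Ω → ℕ
  measX : ∀ i n, Measurable (X i n)
  measY : ∀ n, Measurable (Y n)
  measN : Measurable N
  distX : ∀ i n, P.map (X i n) = law i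
  indepX : ProbabilityTheory.iIndepFun
    (fun (p : E × ℕ) ω => X p.1 p.2 ω) P
  indepYN : ProbabilityTheory.IndepFun (fun ω => ((fun n => Y n ω), N ω))
    (fun ω (p : E × ℕ) => X p.1 p.2 ω) P

/-- The random sum `Z = Σ_{n=1}^{N} X^{Y_n, n}` (empty sum `= 0`). -/
noncomputable def RandomSumSetup.Z {E : Type*} [MeasurableSpace E] {Ω : Type*}
    [MeasurableSpace Ω] {P : Measure Ω} {law : E → Measure ℝ}
    (S : RandomSumSetup E Ω P law) : Ω → ℝ :=
  fun ω => ∑ n ∈ Finset.Icc 1 (S.N ω), S.X (S.Y n ω) n ω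

/-!
Choose `c ≥ 0` with `Π_i((-∞, c]) ≥ 1/2` for every `i`, and `M` such that every state is visited
at some time `n ≤ N ≤ M` with probability at least `δ > 0`; put `κ = M c` and `q = δ 2^{-M}`.
Condition on the value `(y, m)` of `((Y_n)ₙ, N)`, which is independent of the `X`'s. If `m ≤ M`
and `y n₀ = i`, then `X^{i, n₀} ≤ -z - κ` together with `X^{y_n, n} ≤ c` for the other `n ≤ m`
forces `Z ≤ -z`, and by independence this has probability at least `2^{-M} Π_i((-∞, -z - κ])`.
-/

open scoped ENNReal
open Filter ProbabilityTheory

theorem eventually_forall_le_measure_Iic {ι : Type*} [Finite ι] (μ : ι → Measure ℝ)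
    [∀ i, IsProbabilityMeasure (μ i)] {r : ℝ≥0∞} (hr : r < 1) :
    ∀ᶠ c in atTop, ∀ i, r ≤ μ i (Iic c) := by
  refine eventually_all.2 fun i => ?_
  have h := tendsto_measure_Iic_atTop (μ i)
  rw [measure_univ] at h
  exact (h.eventually (lt_mem_nhds hr)).mono fun _ => le_of_lt

theorem eventually_forall_measure_inter_le_pos {ι Ω : Type*} [Finite ι] [MeasurableSpace Ω]
    (μ : Measure Ω) {A : ι → Set Ω} (hA : ∀ i, 0 < μ (A i)) (N : Ω → ℕ) :
    ∀ᶠ M in atTop, ∀ i, 0 < μ (A i ∩ {ω | N ω ≤ M}) := by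
  refine eventually_all.2 fun i => ?_
  have hmono : Monotone fun M => A i ∩ {ω | N ω ≤ M} :=
    fun M M' h => inter_subset_inter_right _ fun ω hω => le_trans hω h
  have hunion : ⋃ M, A i ∩ {ω | N ω ≤ M} = A i := by
    ext ω; simpa using fun _ => ⟨N ω, le_rfl⟩
  have h := tendsto_measure_iUnion_atTop (μ := μ) hmono
  rw [hunion] at h
  exact h.eventually (lt_mem_nhds (hA i))

theorem ProbabilityTheory.iIndepFun.prod_measure_le_measure_sum_le {ι Ω : Type*}
    [MeasurableSpace Ω] {μ : Measure Ω} {X : ι → Ω → ℝ} (hX : iIndepFun X μ) (S : Finset ι)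
    (a : ι → ℝ) :
    ∏ i ∈ S, μ {ω | X i ω ≤ a i} ≤ μ {ω | ∑ i ∈ S, X i ω ≤ ∑ i ∈ S, a i} := by
  rw [← hX.meas_biInter (s := fun i => {ω | X i ω ≤ a i})
    fun i _ => ⟨Iic (a i), measurableSet_Iic, rfl⟩]
  exact measure_mono fun ω hω =>
    mem_ofPred.2 <| Finset.sum_le_sum fun i hi => mem_iInter₂.1 hω i hi

theorem ProbabilityTheory.IndepFun.mul_measure_preimage_le_measure_preimage {Ω α β : Type*}
    [MeasurableSpace Ω] [MeasurableSpace α] [MeasurableSpace β] {μ : Measure Ω}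
    [IsFiniteMeasure μ] {V : Ω → α} {W : Ω → β} (hVW : IndepFun V W μ) (hV : Measurable V)
    (hW : Measurable W) {G : Set (α × β)} (hG : MeasurableSet G) {T : Set α}
    (hT : MeasurableSet T) {p : ℝ≥0∞} (hp : ∀ a ∈ T, p ≤ μ (W ⁻¹' {b | (a, b) ∈ G})) :
    p * μ (V ⁻¹' T) ≤ μ ((fun ω => (V ω, W ω)) ⁻¹' G) := by
  rw [← Measure.map_apply hV hT, ← Measure.map_apply (hV.prodMk hW) hG,
    hVW.map_prod_eq_prod_map_map hV.aemeasurable hW.aemeasurable, Measure.prod_apply hG,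
    ← lintegral_indicator_const hT]
  refine lintegral_mono fun a => ?_
  by_cases ha : a ∈ T
  · rw [indicator_of_mem ha, Measure.map_apply hW (measurable_prodMk_left hG)]
    exact hp a ha
  · simp [indicator_of_notMem ha]

theorem RandomSumSetup.pow_mul_le_measure_sum_le {E Ω : Type*} [MeasurableSpace E]
    [MeasurableSpace Ω] {P : Measure Ω} {law : E → Measure ℝ} (S : RandomSumSetup E Ω P law)
    {c : ℝ} (hc0 : 0 ≤ c) {r : ℝ≥0∞} (hr : r ≤ 1) (hc : ∀ j, r ≤ law j (Iic c)) (y : ℕ → E)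
    {M m n₀ : ℕ} (hm : m ≤ M) (hn₀ : n₀ ∈ Finset.Icc 1 m) (z : ℝ) :
    r ^ M * law (y n₀) (Iic (-z - M * c)) ≤
      P {ω | ∑ n ∈ Finset.Icc 1 m, S.X (y n) n ω ≤ -z} := by
  set u := -z - M * c
  let a : ℕ → ℝ := fun n => if n = n₀ then u else c
  have hindep : iIndepFun (fun n ω => S.X (y n) n ω) P :=
    S.indepX.precomp (g := fun n => (y n, n)) fun n n' h => congrArg Prod.snd h
  have hdist : ∀ n t, P {ω | S.X (y n) n ω ≤ t} = law (y n) (Iic t) := fun n t => by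
    rw [← S.distX, Measure.map_apply (S.measX _ _) measurableSet_Iic]; rfl
  have hcard : ((Finset.Icc 1 m).erase n₀).card = m - 1 := by
    rw [Finset.card_erase_of_mem hn₀, Nat.card_Icc, Nat.add_sub_cancel]
  have hprod :
      r ^ M * law (y n₀) (Iic u) ≤ ∏ n ∈ Finset.Icc 1 m, P {ω | S.X (y n) n ω ≤ a n} := by
    rw [← Finset.mul_prod_erase _ _ hn₀, mul_comm]
    simp only [a, if_pos rfl, hdist]
    gcongr
    calc r ^ M ≤ r ^ (m - 1) := pow_le_pow_of_le_one zero_le hr (by omega)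
      _ ≤ _ := by
        rw [← hcard]
        exact Finset.pow_card_le_prod _ _ _ fun n hn => by
          rw [if_neg (Finset.ne_of_mem_erase hn)]; exact hc _
  have hsum : ∑ n ∈ Finset.Icc 1 m, a n ≤ -z := by
    rw [← Finset.add_sum_erase _ _ hn₀, Finset.sum_congr rfl fun n hn =>
      if_neg (Finset.ne_of_mem_erase hn), Finset.sum_const, hcard, nsmul_eq_mul,
      show a n₀ = u from if_pos rfl]
    have : ((m - 1 : ℕ) : ℝ) ≤ M := by exact_mod_cast (Nat.sub_le m 1).trans hm
    have := mul_le_mul_of_nonneg_right this hc0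
    linarith
  calc _ ≤ _ := hprod
    _ ≤ _ := hindep.prod_measure_le_measure_sum_le _ a
    _ ≤ _ := measure_mono fun ω hω => mem_ofPred.2 (le_trans hω hsum)

theorem measurable_sum_Icc_eval {E : Type*} [MeasurableSpace E] [Countable E]
    [MeasurableSingletonClass E] :
    Measurable fun q : ((ℕ → E) × ℕ) × (E × ℕ → ℝ) =>
      ∑ n ∈ Finset.Icc 1 q.1.2, q.2 (q.1.1 n, n) := by
  have heval : ∀ n, Measurable fun q : (ℕ → E) × (E × ℕ → ℝ) => q.2 (q.1 n, n) := fun n =>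
    (measurable_from_prod_countable_right (f := fun p : E × (E × ℕ → ℝ) => p.2 (p.1, n))
      fun e => measurable_pi_apply (e, n)).comp
      (f := fun q : (ℕ → E) × (E × ℕ → ℝ) => (q.1 n, q.2))
      (((measurable_pi_apply n).comp measurable_fst).prodMk measurable_snd)
  have : Measurable fun q : ((ℕ → E) × (E × ℕ → ℝ)) × ℕ =>
      ∑ n ∈ Finset.Icc 1 q.2, q.1.2 (q.1.1 n, n) :=
    measurable_from_prod_countable_left fun m =>
      Finset.measurable_fun_sum (Finset.Icc 1 m) fun n _ => heval n
  exact this.comp ((measurable_fst.fst.prodMk measurable_snd).prodMk measurable_fst.snd)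

/-- In the random-sum setup, if each state `i ∈ E` is visited with positive probability
among `Y_1, …, Y_N`, then there exist `κ ≥ 0` and `q > 0` such that for all `z ≥ 0`,
`P(Z ≤ −z) ≥ q · max_i Π_i((−∞, −z − κ])`. -/
theorem randomSum_lower_tail_bound {E : Type*} [Fintype E] [Nonempty E] [MeasurableSpace E]
    [MeasurableSingletonClass E] {Ω : Type*} [MeasurableSpace Ω] (P : Measure Ω)
    [IsProbabilityMeasure P] (law : E → Measure ℝ)
    (hlaw : ∀ i, IsProbabilityMeasure (law i)) (S : RandomSumSetup E Ω P law)
    (hvisit : ∀ i : E, 0 < P {ω | ∃ n, 1 ≤ n ∧ n ≤ S.N ω ∧ S.Y n ω = i}) :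
    ∃ κ : ℝ, 0 ≤ κ ∧ ∃ q : ℝ, 0 < q ∧ ∀ z : ℝ, 0 ≤ z →
      ENNReal.ofReal q * ⨆ i, law i (Iic (-z - κ)) ≤ P {ω | S.Z ω ≤ -z} := by
  set A : E → Set Ω := fun i => {ω | ∃ n, 1 ≤ n ∧ n ≤ S.N ω ∧ S.Y n ω = i}
  obtain ⟨c, hc, hc0⟩ := ((eventually_forall_le_measure_Iic law
    (ENNReal.inv_lt_one.2 ENNReal.one_lt_two)).and (eventually_ge_atTop 0)).exists
  obtain ⟨M, hM⟩ := (eventually_forall_measure_inter_le_pos P hvisit S.N).exists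
  obtain ⟨i₁, hi₁⟩ := Finite.exists_min fun i => P (A i ∩ {ω | S.N ω ≤ M})
  have hq : P (A i₁ ∩ {ω | S.N ω ≤ M}) * 2⁻¹ ^ M ≠ ∞ := by finiteness
  refine ⟨M * c, by positivity, _,
    ENNReal.toReal_pos (mul_ne_zero (hM i₁).ne' (pow_ne_zero _ (by norm_num))) hq, fun z _ => ?_⟩
  obtain ⟨i₀, hi₀⟩ := Finite.exists_max fun i => law i (Iic (-z - M * c))
  let T : Set ((ℕ → E) × ℕ) := {t | t.2 ≤ M ∧ ∃ n ∈ Finset.Icc 1 t.2, t.1 n = i₀}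
  have hT : MeasurableSet T := by measurability
  have hVT : (fun ω => ((fun n => S.Y n ω), S.N ω)) ⁻¹' T = A i₀ ∩ {ω | S.N ω ≤ M} := by
    ext ω
    simp only [Finset.mem_Icc, preimage_ofPred_eq, mem_ofPred_eq, mem_inter_iff, T, A]
    tauto
  rw [ENNReal.ofReal_toReal hq]
  calc _ ≤ P (A i₀ ∩ {ω | S.N ω ≤ M}) * 2⁻¹ ^ M * law i₀ (Iic (-z - M * c)) := by
        gcongr ?_ * _ * ?_
        exacts [hi₁ i₀, iSup_le hi₀]
    _ = 2⁻¹ ^ M * law i₀ (Iic (-z - M * c)) * P (A i₀ ∩ {ω | S.N ω ≤ M}) := by ring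
    _ ≤ P {ω | S.Z ω ≤ -z} := by
      rw [← hVT]
      -- `{Z ≤ -z}` is definitionally a preimage under `ω ↦ ((Y · ω, N ω), X · · ω)`
      exact S.indepYN.mul_measure_preimage_le_measure_preimage
        ((measurable_pi_lambda _ S.measY).prodMk S.measN)
        (measurable_pi_lambda _ fun p => S.measX p.1 p.2)
        (measurableSet_le measurable_sum_Icc_eval measurable_const) hT
        fun t ⟨hm, n₀, hn₀, hy⟩ =>
          hy ▸ S.pow_mul_le_measure_sum_le hc0 (by norm_num) hc t.1 hm hn₀ z
end

section
/- In the random-sum setup, assume additionally that P(i ∈ {Y_1, …, Y_N}) > 0 for every i ∈ E (that is, with positive probability some index n with 1 ≤ n ≤ N has Y_n = i). Then there exist κ ≥ 0 and q > 0 such that for all z ≥ 0, P(Z ≥ z) ≥ q · max_{i∈E} Π_i([z + κ, ∞)). -/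
/-!
Fix `i`. As `i` is visited with positive probability, some deterministic path
`N = m, Y₁ = y 1, …, Y_m = y m` with `y n₀ = i` has positive probability. On that event
`Z = X^{i,n₀} + R` with `R = Σ_{n ≠ n₀} X^{y n, n}`; the event is independent of all the `X`'s,
and `R` is independent of `X^{i,n₀}`, so
`P(Z ≥ z) ≥ P(path) · P(R ≥ -κ) · Π_i([z + κ, ∞))`. Choosing `c` with `P(R ≥ c) > 0`, any
`κ ≥ -c` works; finiteness of `E` makes `κ` and the constant uniform in `i`.
-/

open MeasureTheory Set

open ProbabilityTheory
open scoped ENNReal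

lemma exists_measure_setOf_le_ne_zero {Ω : Type*} [MeasurableSpace Ω] (μ : Measure Ω) [NeZero μ]
    (f : Ω → ℝ) : ∃ c : ℝ, μ {ω | c ≤ f ω} ≠ 0 := by
  have hcover : (⋃ k : ℕ, {ω | -(k : ℝ) ≤ f ω}) = univ :=
    eq_univ_of_forall fun ω => mem_iUnion.2
      ⟨⌈-f ω⌉₊, neg_le.1 (Nat.le_ceil (-f ω))⟩
  obtain ⟨k, hk⟩ := exists_measure_pos_of_not_measure_iUnion_null (μ := μ)
    (by rw [hcover]; exact NeZero.ne _)
  exact ⟨-k, hk.ne'⟩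

namespace RandomSumSetup

variable {E Ω : Type*} [MeasurableSpace E] [MeasurableSpace Ω] {P : Measure Ω}
  {law : E → Measure ℝ} (S : RandomSumSetup E Ω P law)

def pathEq (m : ℕ) (y : ℕ → E) : Set Ω :=
  {ω | S.N ω = m ∧ ∀ n ∈ Finset.Icc 1 m, S.Y n ω = y n}

def pathSum (t : Finset ℕ) (y : ℕ → E) (ω : Ω) : ℝ :=
  ∑ n ∈ t, S.X (y n) n ω

lemma Z_eq_of_mem_pathEq {m n₀ : ℕ} {y : ℕ → E} (hn₀ : n₀ ∈ Finset.Icc 1 m) {ω : Ω}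
    (hω : ω ∈ S.pathEq m y) :
    S.Z ω = S.X (y n₀) n₀ ω + S.pathSum ((Finset.Icc 1 m).erase n₀) y ω := by
  obtain ⟨hN, hY⟩ := hω
  rw [Z, pathSum, hN, Finset.sum_congr rfl fun n hn => by rw [hY n hn]]
  exact (Finset.add_sum_erase _ (fun n => S.X (y n) n ω) hn₀).symm

lemma exists_pathEq_of_visit [Countable E] {i : E}
    (hvisit : P {ω | ∃ n, 1 ≤ n ∧ n ≤ S.N ω ∧ S.Y n ω = i} ≠ 0) :
    ∃ m n₀ y, n₀ ∈ Finset.Icc 1 m ∧ y n₀ = i ∧ P (S.pathEq m y) ≠ 0 := by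
  set V := {ω | ∃ n, 1 ≤ n ∧ n ≤ S.N ω ∧ S.Y n ω = i}
  -- `pathEq m y` sees only finitely many values of `y`, so countably many patterns suffice
  let piece : (Σ m : ℕ, Fin (m + 1) → E) → Set Ω := fun p =>
    V ∩ {ω | S.N ω = p.1 ∧ ∀ k : Fin (p.1 + 1), S.Y k ω = p.2 k}
  have hcover : (⋃ p, piece p) = V :=
    Subset.antisymm (iUnion_subset fun _ => inter_subset_left) fun ω hω =>
      mem_iUnion.2 ⟨⟨S.N ω, fun k => S.Y k ω⟩, hω, rfl, fun _ => rfl⟩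
  obtain ⟨p, hp⟩ := exists_measure_pos_of_not_measure_iUnion_null (μ := P)
    (by rwa [hcover])
  obtain ⟨ω₀, ⟨n₀, hn₀1, hn₀m, rfl⟩, hN₀, hY₀⟩ := nonempty_of_measure_ne_zero hp.ne'
  refine ⟨S.N ω₀, n₀, fun n => S.Y n ω₀, Finset.mem_Icc.2 ⟨hn₀1, hn₀m⟩, rfl,
    fun h0 => hp.ne' (measure_mono_null ?_ h0)⟩
  rintro ω ⟨-, hN, hY⟩
  refine ⟨hN.trans hN₀.symm, fun n hn => ?_⟩
  have hlt : n < p.1 + 1 := Nat.lt_succ_of_le (hN₀ ▸ (Finset.mem_Icc.1 hn).2)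
  exact (hY ⟨n, hlt⟩).trans (hY₀ ⟨n, hlt⟩).symm

lemma indepFun_X_pathSum {t : Finset ℕ} {n₀ : ℕ} (hn₀ : n₀ ∉ t) (y : ℕ → E) (i : E) :
    IndepFun (S.X i n₀) (S.pathSum t y) P := by
  classical
  have hsum : S.pathSum t y =
      ∑ p ∈ t.image fun n => (y n, n), fun ω => S.X p.1 p.2 ω := by
    ext ω
    rw [Finset.sum_apply, Finset.sum_image fun _ _ _ _ h => (Prod.ext_iff.1 h).2]
    rfl
  rw [hsum]
  refine (S.indepX.indepFun_finsetSum_of_notMem (i := (i, n₀))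
    (fun p => S.measX p.1 p.2) ?_).symm
  simp [hn₀]

lemma measure_pathEq_inter [MeasurableSingletonClass E] (m : ℕ) (y : ℕ → E)
    {G : Set (E × ℕ → ℝ)} (hG : MeasurableSet G) :
    P (S.pathEq m y ∩ (fun ω p => S.X p.1 p.2 ω) ⁻¹' G) =
      P (S.pathEq m y) * P ((fun ω p => S.X p.1 p.2 ω) ⁻¹' G) := by
  have hpath : MeasurableSet
      {p : (ℕ → E) × ℕ | p.2 = m ∧ ∀ n ∈ Finset.Icc 1 m, p.1 n = y n} := by
    measurability
  exact S.indepYN.measure_inter_preimage_eq_mul _ _ hpath hG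

lemma measure_pathEq_mul_le [MeasurableSingletonClass E] {m n₀ : ℕ}
    (hn₀ : n₀ ∈ Finset.Icc 1 m) (y : ℕ → E) (a b : ℝ) :
    P (S.pathEq m y) * (P {ω | a ≤ S.X (y n₀) n₀ ω} *
      P {ω | b ≤ S.pathSum ((Finset.Icc 1 m).erase n₀) y ω}) ≤ P {ω | a + b ≤ S.Z ω} := by
  set t := (Finset.Icc 1 m).erase n₀
  have hG : MeasurableSet ({F : E × ℕ → ℝ | a ≤ F (y n₀, n₀)} ∩
      {F | b ≤ ∑ n ∈ t, F (y n, n)}) :=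
    (measurableSet_le measurable_const (measurable_pi_apply _)).inter
      (measurableSet_le measurable_const
        (Finset.measurable_sum _ fun n _ => measurable_pi_apply _))
  calc _ = P (S.pathEq m y ∩ ({ω | a ≤ S.X (y n₀) n₀ ω} ∩ {ω | b ≤ S.pathSum t y ω})) := by
        have hXR : P ({ω | a ≤ S.X (y n₀) n₀ ω} ∩ {ω | b ≤ S.pathSum t y ω}) =
            P {ω | a ≤ S.X (y n₀) n₀ ω} * P {ω | b ≤ S.pathSum t y ω} :=
          (S.indepFun_X_pathSum (Finset.notMem_erase n₀ _) y (y n₀)).measure_inter_preimage_eq_mul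
            _ _ measurableSet_Ici measurableSet_Ici
        rw [← hXR]
        exact (S.measure_pathEq_inter m y hG).symm
    _ ≤ P {ω | a + b ≤ S.Z ω} := measure_mono fun ω ⟨hω, ha, hb⟩ => by
        show a + b ≤ S.Z ω
        rw [S.Z_eq_of_mem_pathEq hn₀ hω]
        exact add_le_add ha hb

lemma exists_tail_bound_of_visit [Countable E] [MeasurableSingletonClass E] {i : E}
    (hvisit : P {ω | ∃ n, 1 ≤ n ∧ n ≤ S.N ω ∧ S.Y n ω = i} ≠ 0) :
    ∃ c : ℝ, ∃ q : ℝ≥0∞, q ≠ 0 ∧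
      ∀ κ, c ≤ κ → ∀ z, q * law i (Ici (z + κ)) ≤ P {ω | z ≤ S.Z ω} := by
  obtain ⟨m, n₀, y, hn₀, rfl, hpath⟩ := S.exists_pathEq_of_visit hvisit
  set R := S.pathSum ((Finset.Icc 1 m).erase n₀) y
  have : NeZero P := ⟨fun h => hpath (by simp [h])⟩
  obtain ⟨c, hc⟩ := exists_measure_setOf_le_ne_zero P R
  refine ⟨-c, P (S.pathEq m y) * P {ω | c ≤ R ω}, mul_ne_zero hpath hc, fun κ hκ z => ?_⟩
  rw [← S.distX, Measure.map_apply (S.measX _ _) measurableSet_Ici]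
  calc P (S.pathEq m y) * P {ω | c ≤ R ω} * P (S.X (y n₀) n₀ ⁻¹' Ici (z + κ))
      ≤ P (S.pathEq m y) * (P {ω | z + κ ≤ S.X (y n₀) n₀ ω} * P {ω | -κ ≤ R ω}) := by
        rw [mul_assoc, mul_comm (P {ω | c ≤ R ω})]
        gcongr P _ * (_ * P ?_)
        exact fun ω (hω : c ≤ R ω) => show -κ ≤ R ω by linarith
    _ ≤ P {ω | z + κ + -κ ≤ S.Z ω} := S.measure_pathEq_mul_le hn₀ y _ _
    _ = P {ω | z ≤ S.Z ω} := by rw [add_neg_cancel_right]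

end RandomSumSetup

theorem randomSum_upper_tail_bound_general {E : Type*} [Fintype E] [MeasurableSpace E]
    [MeasurableSingletonClass E] {Ω : Type*} [MeasurableSpace Ω] (P : Measure Ω)
    (law : E → Measure ℝ)
    (S : RandomSumSetup E Ω P law)
    (hvisit : ∀ i : E, 0 < P {ω | ∃ n, 1 ≤ n ∧ n ≤ S.N ω ∧ S.Y n ω = i}) :
    ∃ κ : ℝ, 0 ≤ κ ∧ ∃ q : ℝ, 0 < q ∧ ∀ z : ℝ, 0 ≤ z →
      ENNReal.ofReal q * ⨆ i, law i (Ici (z + κ)) ≤ P {ω | z ≤ S.Z ω} := by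
  choose c q hq hbound using fun i => S.exists_tail_bound_of_visit (hvisit i).ne'
  obtain ⟨κ, hκ⟩ := Finite.bddAbove_range c
  have hq_inf : 0 < Finset.univ.inf q :=
    (Finset.lt_inf_iff ENNReal.zero_lt_top).2 fun i _ => pos_iff_ne_zero.2 (hq i)
  obtain ⟨r, -, hr, hrq⟩ := ENNReal.lt_iff_exists_real_btwn.1 hq_inf
  refine ⟨max κ 0, le_max_right _ _, r, ENNReal.ofReal_pos.1 hr, fun z _ => ?_⟩
  rw [ENNReal.mul_iSup]
  refine iSup_le fun i =>
    le_trans ?_ (hbound i (max κ 0) ((hκ ⟨i, rfl⟩).trans (le_max_left _ _)) z)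
  gcongr
  exact hrq.le.trans (Finset.inf_le (Finset.mem_univ i))

/-- In the random-sum setup, if each state `i ∈ E` is visited with positive probability
among `Y_1, …, Y_N`, then there exist `κ ≥ 0` and `q > 0` such that for all `z ≥ 0`,
`P(Z ≥ z) ≥ q · max_i Π_i([z + κ, ∞))`. -/
theorem randomSum_upper_tail_bound {E : Type*} [Fintype E] [Nonempty E] [MeasurableSpace E]
    [MeasurableSingletonClass E] {Ω : Type*} [MeasurableSpace Ω] (P : Measure Ω)
    [IsProbabilityMeasure P] (law : E → Measure ℝ)
    (hlaw : ∀ i, IsProbabilityMeasure (law i)) (S : RandomSumSetup E Ω P law)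
    (hvisit : ∀ i : E, 0 < P {ω | ∃ n, 1 ≤ n ∧ n ≤ S.N ω ∧ S.Y n ω = i}) :
    ∃ κ : ℝ, 0 ≤ κ ∧ ∃ q : ℝ, 0 < q ∧ ∀ z : ℝ, 0 ≤ z →
      ENNReal.ofReal q * ⨆ i, law i (Ici (z + κ)) ≤ P {ω | z ≤ S.Z ω} :=
  randomSum_upper_tail_bound_general P law S hvisit
end

section
/- Let E be a nonempty finite set, let (Π_i)_{i∈E} be Borel probability measures on ℝ, and let (ρ_i)_{i∈E} be strictly positive real numbers. Then the finite Borel measure Σ_{i∈E} ρ_i·Π_i satisfies condition (TO) if and only if for some (equivalently, every) κ > 0 one has ∫_κ^∞ x·(max_{i∈E} Π_i([x,∞))) / (1 + ∫_0^x ∫_y^∞ max_{i∈E} Π_i((−∞,−z]) dz dy) dx < ∞, where the integrand is interpreted as 0 at points x where the double integral in the denominator is infinite. -/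
open MeasureTheory Set

/-- The max-tail analogue of the (TO) integral at level `κ`:
`∫_κ^∞ x·(max_i Π_i([x,∞))) / (1 + ∫_0^x ∫_y^∞ max_i Π_i((−∞,−z]) dz dy) dx < ∞`,
division by an infinite denominator being interpreted as `0`. -/
def TOmaxAt {E : Type*} [Fintype E] (law : E → Measure ℝ) (κ : ℝ) : Prop :=
  (∫⁻ x in Ioi κ,
      (ENNReal.ofReal x * ⨆ i, law i (Ici x)) /
        (1 + ∫⁻ y in Ioc (0 : ℝ) x, ∫⁻ z in Ioi y, ⨆ i, law i (Iic (-z)))) < ⊤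

/-!
Both conditions are finiteness of the same integral functional of a right tail `F` and a left
tail `G`. This functional is monotone in `F` and antitone in `G` up to multiplicative constants,
and the tails of `∑ ρ_i Π_i` and `max_i Π_i` are within constant factors of each other, which
gives the equivalence at each fixed level. The level does not matter for bounded `F`, since the
integrand is then bounded on every bounded interval.
-/

open ENNReal

noncomputable def TOIntegral (F G : ℝ → ℝ≥0∞) (κ : ℝ) : ℝ≥0∞ :=
  ∫⁻ x in Ioi κ, (ENNReal.ofReal x * F x) / (1 + ∫⁻ y in Ioc (0 : ℝ) x, ∫⁻ z in Ioi y, G z)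

lemma TOat_iff_TOIntegral_lt_top (μ : Measure ℝ) (κ : ℝ) :
    TOat μ κ ↔ TOIntegral (fun x ↦ μ (Ici x)) (fun z ↦ μ (Iic (-z))) κ < ⊤ :=
  Iff.rfl

lemma TOmaxAt_iff_TOIntegral_lt_top {E : Type*} [Fintype E] (law : E → Measure ℝ) (κ : ℝ) :
    TOmaxAt law κ ↔
      TOIntegral (fun x ↦ ⨆ i, law i (Ici x)) (fun z ↦ ⨆ i, law i (Iic (-z))) κ < ⊤ :=
  Iff.rfl

section TOIntegral

variable {F F' G G' : ℝ → ℝ≥0∞}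

lemma one_add_doubleIntegral_le {b : ℝ≥0∞} (hb : b ≠ ⊤) (hG : ∀ z, G' z ≤ b * G z) (x : ℝ) :
    1 + ∫⁻ y in Ioc (0 : ℝ) x, ∫⁻ z in Ioi y, G' z ≤
      (1 + b) * (1 + ∫⁻ y in Ioc (0 : ℝ) x, ∫⁻ z in Ioi y, G z) := by
  set J := ∫⁻ y in Ioc (0 : ℝ) x, ∫⁻ z in Ioi y, G z
  calc 1 + ∫⁻ y in Ioc (0 : ℝ) x, ∫⁻ z in Ioi y, G' z
      ≤ 1 + ∫⁻ y in Ioc (0 : ℝ) x, ∫⁻ z in Ioi y, b * G z := by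
        gcongr with y z
        exact hG z
    _ = 1 + b * J := by simp_rw [lintegral_const_mul' _ _ hb, J]
    _ ≤ (1 + J) + (b + b * J) := add_le_add le_self_add le_add_self
    _ = (1 + b) * (1 + J) := by ring

lemma TOIntegral_le {a b : ℝ≥0∞} (ha : a ≠ ⊤) (hb : b ≠ ⊤) (hF : ∀ x, F x ≤ a * F' x)
    (hG : ∀ z, G' z ≤ b * G z) (κ : ℝ) :
    TOIntegral F G κ ≤ a * (1 + b) * TOIntegral F' G' κ := by
  have h1b : 1 + b ≠ ⊤ := add_ne_top.mpr ⟨one_ne_top, hb⟩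
  rw [TOIntegral, TOIntegral, ← lintegral_const_mul' _ _ (mul_ne_top ha h1b)]
  refine lintegral_mono fun x ↦ ?_
  set D := 1 + ∫⁻ y in Ioc (0 : ℝ) x, ∫⁻ z in Ioi y, G z
  set D' := 1 + ∫⁻ y in Ioc (0 : ℝ) x, ∫⁻ z in Ioi y, G' z
  calc ENNReal.ofReal x * F x / D
      = (1 + b) * (ENNReal.ofReal x * F x) / ((1 + b) * D) :=
        (ENNReal.mul_div_mul_left _ _ (by simp) h1b).symm
    _ ≤ (1 + b) * (ENNReal.ofReal x * (a * F' x)) / D' := by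
        gcongr
        · exact hF x
        · exact one_add_doubleIntegral_le hb hG x
    _ = a * (1 + b) * (ENNReal.ofReal x * F' x / D') := by
        simp only [div_eq_mul_inv]
        ring

lemma TOIntegral_lt_top_of_le {a b : ℝ≥0∞} (ha : a ≠ ⊤) (hb : b ≠ ⊤)
    (hF : ∀ x, F x ≤ a * F' x) (hG : ∀ z, G' z ≤ b * G z) {κ : ℝ}
    (h : TOIntegral F' G' κ < ⊤) : TOIntegral F G κ < ⊤ :=
  (TOIntegral_le ha hb hF hG κ).trans_lt
    (mul_lt_top (mul_lt_top ha.lt_top (add_lt_top.mpr ⟨one_lt_top, hb.lt_top⟩)) h)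

lemma TOIntegral_lt_top_of_le_one (hF : ∀ x, F x ≤ 1) {κ : ℝ} (h : TOIntegral F G κ < ⊤)
    (κ' : ℝ) : TOIntegral F G κ' < ⊤ := by
  set f := fun x : ℝ ↦
    (ENNReal.ofReal x * F x) / (1 + ∫⁻ y in Ioc (0 : ℝ) x, ∫⁻ z in Ioi y, G z)
  have hbounded : ∫⁻ x in Ioc κ' κ, f x < ⊤ := by
    refine setLIntegral_lt_top_of_le_nnreal (by simp) ⟨κ.toNNReal, fun x hx ↦ ?_⟩
    calc f x ≤ ENNReal.ofReal x * F x / 1 := ENNReal.div_le_div le_rfl le_self_add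
      _ ≤ ENNReal.ofReal x * 1 := by rw [div_one]; gcongr; exact hF x
      _ ≤ ENNReal.ofReal κ := by rw [mul_one]; exact ENNReal.ofReal_le_ofReal hx.2
  calc TOIntegral F G κ' ≤ ∫⁻ x in Ioc κ' κ ∪ Ioi κ, f x :=
        lintegral_mono_set fun x hx ↦ (le_or_gt x κ).imp (fun h ↦ ⟨hx, h⟩) id
    _ ≤ (∫⁻ x in Ioc κ' κ, f x) + TOIntegral F G κ := lintegral_union_le _ _ _
    _ < ⊤ := add_lt_top.mpr ⟨hbounded, h⟩

end TOIntegral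

section WeightedSum

variable {α E : Type*} [MeasurableSpace α] [Fintype E]

lemma sum_smul_apply_le_mul_iSup (w : E → ℝ≥0∞) (ν : E → Measure α) (s : Set α) :
    (∑ i, w i • ν i) s ≤ (∑ i, w i) * ⨆ i, ν i s := by
  rw [Measure.coe_finsetSum, Finset.sum_apply, Finset.sum_mul]
  exact Finset.sum_le_sum fun i _ ↦ mul_le_mul_right (le_iSup (fun j ↦ ν j s) i) _

lemma iSup_le_mul_sum_smul_apply {w : E → ℝ≥0∞} (hw0 : ∀ i, w i ≠ 0) (hwtop : ∀ i, w i ≠ ⊤)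
    (ν : E → Measure α) (s : Set α) :
    ⨆ i, ν i s ≤ (∑ i, (w i)⁻¹) * (∑ i, w i • ν i) s := by
  refine iSup_le fun i ↦ ?_
  calc ν i s = (w i)⁻¹ * (w i * ν i s) := by
        rw [← mul_assoc, ENNReal.inv_mul_cancel (hw0 i) (hwtop i), one_mul]
    _ ≤ (∑ j, (w j)⁻¹) * ∑ j, w j * ν j s :=
        mul_le_mul'
          (Finset.single_le_sum (f := fun j ↦ (w j)⁻¹) (fun _ _ ↦ zero_le) (Finset.mem_univ i))
          (Finset.single_le_sum (f := fun j ↦ w j * ν j s) (fun _ _ ↦ zero_le) (Finset.mem_univ i))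
    _ = (∑ j, (w j)⁻¹) * (∑ j, w j • ν j) s := by
        simp only [Measure.coe_finsetSum, Finset.sum_apply, Measure.smul_apply, smul_eq_mul]

lemma TOat_sum_smul_iff_TOmaxAt {w : E → ℝ≥0∞} (hw0 : ∀ i, w i ≠ 0) (hwtop : ∀ i, w i ≠ ⊤)
    (law : E → Measure ℝ) (κ : ℝ) : TOat (∑ i, w i • law i) κ ↔ TOmaxAt law κ := by
  have hsum : ∑ i, w i ≠ ⊤ := sum_ne_top.mpr fun i _ ↦ hwtop i
  have hsum_inv : ∑ i, (w i)⁻¹ ≠ ⊤ := sum_ne_top.mpr fun i _ ↦ inv_ne_top.mpr (hw0 i)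
  rw [TOat_iff_TOIntegral_lt_top, TOmaxAt_iff_TOIntegral_lt_top]
  exact ⟨TOIntegral_lt_top_of_le hsum_inv hsum
      (fun _ ↦ iSup_le_mul_sum_smul_apply hw0 hwtop _ _) (fun _ ↦ sum_smul_apply_le_mul_iSup _ _ _),
    TOIntegral_lt_top_of_le hsum hsum_inv
      (fun _ ↦ sum_smul_apply_le_mul_iSup _ _ _) (fun _ ↦ iSup_le_mul_sum_smul_apply hw0 hwtop _ _)⟩

end WeightedSum

lemma TOmaxAt_of_TOmaxAt {E : Type*} [Fintype E] {law : E → Measure ℝ}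
    (hlaw : ∀ i, IsProbabilityMeasure (law i)) {κ : ℝ} (h : TOmaxAt law κ) (κ' : ℝ) :
    TOmaxAt law κ' :=
  TOIntegral_lt_top_of_le_one (fun _ ↦ iSup_le fun _ ↦ prob_le_one) h κ'

theorem TO_sum_iff_max_general {E : Type*} [Fintype E] (law : E → Measure ℝ)
    (hlaw : ∀ i, IsProbabilityMeasure (law i)) (ρ : E → ℝ) (hρ : ∀ i, 0 < ρ i) :
    (TO (∑ i, ENNReal.ofReal (ρ i) • law i) ↔ ∃ κ > (0 : ℝ), TOmaxAt law κ) ∧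
    (TO (∑ i, ENNReal.ofReal (ρ i) • law i) ↔ ∀ κ > (0 : ℝ), TOmaxAt law κ) := by
  have key : ∀ κ, TOat (∑ i, ENNReal.ofReal (ρ i) • law i) κ ↔ TOmaxAt law κ :=
    TOat_sum_smul_iff_TOmaxAt (fun i ↦ (ofReal_pos.mpr (hρ i)).ne') (fun _ ↦ ofReal_ne_top) law
  have exists_iff_forall : (∃ κ > (0 : ℝ), TOmaxAt law κ) ↔ ∀ κ > (0 : ℝ), TOmaxAt law κ :=
    ⟨fun ⟨_, _, h⟩ κ' _ ↦ TOmaxAt_of_TOmaxAt hlaw h κ', fun h ↦ ⟨1, one_pos, h 1 one_pos⟩⟩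
  have TO_iff : TO (∑ i, ENNReal.ofReal (ρ i) • law i) ↔ ∃ κ > (0 : ℝ), TOmaxAt law κ :=
    exists_congr fun κ ↦ and_congr_right fun _ ↦ key κ
  exact ⟨TO_iff, TO_iff.trans exists_iff_forall⟩

/-- For probability measures `Π_i` and weights `ρ_i > 0`, the measure `Σ_i ρ_i·Π_i`
satisfies (TO) iff for some (equivalently, every) `κ > 0` the max-tail integral
condition holds at level `κ`. -/
theorem TO_sum_iff_max {E : Type*} [Fintype E] [Nonempty E] (law : E → Measure ℝ)
    (hlaw : ∀ i, IsProbabilityMeasure (law i)) (ρ : E → ℝ) (hρ : ∀ i, 0 < ρ i) :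
    (TO (∑ i, ENNReal.ofReal (ρ i) • law i) ↔ ∃ κ > (0 : ℝ), TOmaxAt law κ) ∧
    (TO (∑ i, ENNReal.ofReal (ρ i) • law i) ↔ ∀ κ > (0 : ℝ), TOmaxAt law κ) :=
  TO_sum_iff_max_general law hlaw ρ hρ
end

section
/- Let μ and ν be Borel measures on ℝ with μ([x,∞)), μ((−∞,−x]), ν([x,∞)), ν((−∞,−x]) all finite for every x > 0, and suppose there exist constants 0 < c₁ ≤ c₂ such that for every x > 0: c₁·ν([x,∞)) ≤ μ([x,∞)) ≤ c₂·ν([x,∞)) and c₁·ν((−∞,−x]) ≤ μ((−∞,−x]) ≤ c₂·ν((−∞,−x]). Then μ satisfies condition (TO) if and only if ν satisfies condition (TO). -/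
open MeasureTheory Set

lemma TO_mono (μ ν : Measure ℝ) (a b : ℝ) (ha : 0 < a) (hb : 0 < b)
    (hnum : ∀ x : ℝ, 0 < x → μ (Ici x) ≤ ENNReal.ofReal b * ν (Ici x))
    (hden : ∀ x : ℝ, 0 < x → ENNReal.ofReal a * ν (Iic (-x)) ≤ μ (Iic (-x)))
    (h : TO ν) : TO μ := by
  obtain ⟨κ, hκ, hTO⟩ := h
  refine ⟨κ, hκ, ?_⟩
  set a' : ℝ := min 1 a with ha'def
  have ha' : 0 < a' := lt_min one_pos ha
  set C : ENNReal := ENNReal.ofReal (b / a') with hC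
  have hC_ne : C ≠ ⊤ := ENNReal.ofReal_ne_top
  -- denominator comparison
  have hden' : ∀ x : ℝ, ENNReal.ofReal a' * TOden ν x ≤ TOden μ x := by
    intro x
    have hI : ENNReal.ofReal a * (∫⁻ y in Ioc (0 : ℝ) x, ∫⁻ z in Ioi y, ν (Iic (-z)))
        ≤ ∫⁻ y in Ioc (0 : ℝ) x, ∫⁻ z in Ioi y, μ (Iic (-z)) := by
      rw [← lintegral_const_mul' _ _ ENNReal.ofReal_ne_top]
      refine setLIntegral_mono' measurableSet_Ioc (fun y hy => ?_)
      rw [← lintegral_const_mul' _ _ ENNReal.ofReal_ne_top]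
      refine setLIntegral_mono' measurableSet_Ioi (fun z hz => ?_)
      exact hden z (hy.1.trans hz)
    calc ENNReal.ofReal a' * TOden ν x
        = ENNReal.ofReal a' * 1 + ENNReal.ofReal a' *
          (∫⁻ y in Ioc (0 : ℝ) x, ∫⁻ z in Ioi y, ν (Iic (-z))) := by
          rw [TOden, mul_add]
      _ ≤ 1 + ∫⁻ y in Ioc (0 : ℝ) x, ∫⁻ z in Ioi y, μ (Iic (-z)) := by
          gcongr
          · rw [mul_one]
            exact ENNReal.ofReal_le_one.2 (min_le_left _ _)
          · calc ENNReal.ofReal a' *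
                (∫⁻ y in Ioc (0 : ℝ) x, ∫⁻ z in Ioi y, ν (Iic (-z)))
                ≤ ENNReal.ofReal a *
                (∫⁻ y in Ioc (0 : ℝ) x, ∫⁻ z in Ioi y, ν (Iic (-z))) := by
                  gcongr
                  exact min_le_right 1 a
            _ ≤ _ := hI
      _ = TOden μ x := rfl
  -- pointwise comparison of integrands
  have hpt : ∀ x ∈ Ioi κ, (ENNReal.ofReal x * μ (Ici x)) / TOden μ x ≤
      C * ((ENNReal.ofReal x * ν (Ici x)) / TOden ν x) := by
    intro x hx
    have hxpos : 0 < x := hκ.trans hx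
    by_cases hdν : TOden ν x = ⊤
    · have : TOden μ x = ⊤ := by
        have := hden' x
        rw [hdν, ENNReal.mul_top (ENNReal.ofReal_pos.2 ha').ne'] at this
        exact top_le_iff.1 this
      simp [this]
    by_cases hdμ : TOden μ x = ⊤
    · simp [hdμ]
    have hdν1 : (1 : ENNReal) ≤ TOden ν x := le_add_right le_rfl
    have hdν0 : TOden ν x ≠ 0 := (one_pos.trans_le hdν1).ne'
    have hdμ0 : TOden μ x ≠ 0 :=
      (one_pos.trans_le (le_add_right le_rfl : (1 : ENNReal) ≤ TOden μ x)).ne'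
    rw [ENNReal.div_le_iff_le_mul (Or.inl hdμ0) (Or.inl hdμ)]
    calc ENNReal.ofReal x * μ (Ici x)
        ≤ ENNReal.ofReal x * (ENNReal.ofReal b * ν (Ici x)) := by
          gcongr; exact hnum x hxpos
      _ = ENNReal.ofReal b * (ENNReal.ofReal x * ν (Ici x)) := by ring
      _ = (C * ENNReal.ofReal a') * (ENNReal.ofReal x * ν (Ici x)) := by
          rw [hC, ← ENNReal.ofReal_mul (div_pos hb ha').le, div_mul_cancel₀ _ (ne_of_gt ha')]
      _ = C * ((ENNReal.ofReal x * ν (Ici x)) / TOden ν x * TOden ν x) *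
            ENNReal.ofReal a' := by
          rw [ENNReal.div_mul_cancel hdν0 hdν]; ring
      _ = C * ((ENNReal.ofReal x * ν (Ici x)) / TOden ν x) *
            (ENNReal.ofReal a' * TOden ν x) := by ring
      _ ≤ C * ((ENNReal.ofReal x * ν (Ici x)) / TOden ν x) * TOden μ x := by
          gcongr; exact hden' x
  calc (∫⁻ x in Ioi κ, (ENNReal.ofReal x * μ (Ici x)) / TOden μ x)
      ≤ ∫⁻ x in Ioi κ, C * ((ENNReal.ofReal x * ν (Ici x)) / TOden ν x) :=
        setLIntegral_mono' measurableSet_Ioi hpt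
    _ = C * ∫⁻ x in Ioi κ, (ENNReal.ofReal x * ν (Ici x)) / TOden ν x :=
        lintegral_const_mul' _ _ hC_ne
    _ < ⊤ := ENNReal.mul_lt_top hC_ne.lt_top hTO

/-- If two Borel measures on `ℝ` have finite two-sided tails and these tails are
comparable up to multiplicative constants `0 < c₁ ≤ c₂`, then one satisfies (TO)
iff the other does. -/
theorem TO_of_comparable_tails (μ ν : Measure ℝ)
    (hμ : ∀ x : ℝ, 0 < x → μ (Ici x) < ⊤) (hμ' : ∀ x : ℝ, 0 < x → μ (Iic (-x)) < ⊤)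
    (hν : ∀ x : ℝ, 0 < x → ν (Ici x) < ⊤) (hν' : ∀ x : ℝ, 0 < x → ν (Iic (-x)) < ⊤)
    (c₁ c₂ : ℝ) (hc₁ : 0 < c₁) (hc : c₁ ≤ c₂)
    (h₁ : ∀ x : ℝ, 0 < x →
      ENNReal.ofReal c₁ * ν (Ici x) ≤ μ (Ici x) ∧ μ (Ici x) ≤ ENNReal.ofReal c₂ * ν (Ici x))
    (h₂ : ∀ x : ℝ, 0 < x →
      ENNReal.ofReal c₁ * ν (Iic (-x)) ≤ μ (Iic (-x)) ∧
        μ (Iic (-x)) ≤ ENNReal.ofReal c₂ * ν (Iic (-x))) :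
    TO μ ↔ TO ν := by
  have hc₂ : 0 < c₂ := hc₁.trans_le hc
  constructor
  · refine TO_mono ν μ c₂⁻¹ c₁⁻¹ (by positivity) (by positivity) (fun x hx => ?_) (fun x hx => ?_)
    · -- ν (Ici x) ≤ c₁⁻¹ * μ (Ici x)
      calc ν (Ici x) = ENNReal.ofReal c₁⁻¹ * (ENNReal.ofReal c₁ * ν (Ici x)) := by
            rw [← mul_assoc, ← ENNReal.ofReal_mul (inv_nonneg.2 hc₁.le),
              inv_mul_cancel₀ (ne_of_gt hc₁), ENNReal.ofReal_one, one_mul]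
        _ ≤ ENNReal.ofReal c₁⁻¹ * μ (Ici x) := by gcongr; exact (h₁ x hx).1
    · -- c₂⁻¹ * μ (Iic (-x)) ≤ ν (Iic (-x))
      calc ENNReal.ofReal c₂⁻¹ * μ (Iic (-x))
          ≤ ENNReal.ofReal c₂⁻¹ * (ENNReal.ofReal c₂ * ν (Iic (-x))) := by
            gcongr; exact (h₂ x hx).2
        _ = ν (Iic (-x)) := by
            rw [← mul_assoc, ← ENNReal.ofReal_mul (inv_nonneg.2 hc₂.le),
              inv_mul_cancel₀ (ne_of_gt hc₂), ENNReal.ofReal_one, one_mul]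
  · exact TO_mono μ ν c₁ c₂ hc₁ hc₂ (fun x hx => (h₁ x hx).2) (fun x hx => (h₂ x hx).1)
end
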